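/- arXiv:alg-geom/9504016 — 6 statements merged into one kernel-verified Lean document; each statement's English description precedes it below -/
import Mathlib

section
/- If G and G' are invertible complex matrices (of sizes r×r and r'×r'), K = norm log G and K' = norm log G' are their normalised logarithms (i.e. K satisfies exp(2πiK) = G and every eigenvalue μ of K has Re(μ) ∈ [0,1), similarly for K'), and C is an r×r' complex matrix with GC = CG', then KC = CK'. -/
/-!
Let `T` be the Sylvester operator `Y ↦ 2πi (K Y - Y K')`. Its exponential is
`Y ↦ exp (2πi K) Y exp (-2πi K')`, so `G C = C G'` says that `exp T` fixes `C`. The eigenvalues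
of `T` are of the form `2πi (α - β)` with `α`, `β` eigenvalues of `K`, `K'`; as their real
parts lie in `[0, 1)`, no eigenvalue of `T` lies in `2πiℤ ∖ {0}`. Now
`exp T - 1 = exprel T * T` with `exprel z = (exp z - 1) / z`, whose zeros are exactly
`2πiℤ ∖ {0}`; so `exprel T` is injective, and `exprel T (T C) = 0` forces `T C = 0`.
-/

open Complex Matrix NormedSpace
open scoped Nat Kronecker

section Exprel

variable {𝔸 : Type*}

/-- `(exp x - 1) / x`, defined by its power series. -/
noncomputable def exprel [Ring 𝔸] [Algebra ℂ 𝔸] [TopologicalSpace 𝔸] (x : 𝔸) : 𝔸 :=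
  ∑' k : ℕ, ((k + 1)! : ℂ)⁻¹ • x ^ k

variable [NormedRing 𝔸] [NormedAlgebra ℂ 𝔸]

lemma commute_exprel (x : 𝔸) : Commute x (exprel x) :=
  .tsum_right x fun k => ((Commute.refl x).pow_right k).smul_right _

variable [CompleteSpace 𝔸]

lemma summable_exprel (x : 𝔸) : Summable fun k : ℕ => ((k + 1)! : ℂ)⁻¹ • x ^ k := by
  refine .of_norm_bounded (norm_expSeries_summable' (𝕂 := ℂ) x) fun k => ?_
  rw [Nat.factorial_succ, Nat.cast_mul, mul_inv, mul_smul, norm_smul (_ : ℂ)⁻¹, norm_inv]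
  refine mul_le_of_le_one_left (norm_nonneg _) (inv_le_one_of_one_le₀ ?_)
  norm_cast
  simp

lemma mul_exprel (x : 𝔸) : x * exprel x = exp x - 1 := by
  rw [congrFun (exp_eq_tsum ℂ) x, (expSeries_summable' x).tsum_eq_zero_add, exprel,
    ← (summable_exprel x).tsum_mul_left]
  simp [pow_succ']

end Exprel

namespace Complex

lemma exp_eq_one_of_exprel_eq_zero {z : ℂ} (h : exprel z = 0) : z ≠ 0 ∧ Complex.exp z = 1 := by
  refine ⟨?_, ?_⟩
  · rintro rfl
    rw [exprel, tsum_eq_single 0 fun k hk => by simp [hk]] at h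
    simp at h
  · rw [exp_eq_exp_ℂ, ← sub_eq_zero, ← mul_exprel, h, mul_zero]

lemma exp_two_pi_I_mul_injOn :
    Set.InjOn (fun z : ℂ => Complex.exp (2 * Real.pi * I * z)) {z | z.re ∈ Set.Ico 0 1} := by
  rintro z ⟨hz0, hz1⟩ w ⟨hw0, hw1⟩ h
  obtain ⟨n, hn⟩ := exp_eq_exp_iff_exists_int.mp h
  have hzw : z = w + n := by
    apply mul_left_cancel₀ (by simp [Real.pi_ne_zero, I_ne_zero] : (2 * Real.pi * I : ℂ) ≠ 0)
    linear_combination hn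
  have hre : z.re = w.re + n := by simp [hzw]
  have hn0 : n = 0 := by
    have h1 : n < 1 := by exact_mod_cast (by linarith : (n : ℝ) < 1)
    have h2 : -1 < n := by exact_mod_cast (by linarith : (-1 : ℝ) < n)
    omega
  simp [hzw, hn0]

end Complex

namespace Matrix

variable {m n : Type*} [DecidableEq m] [DecidableEq n]

/-- The matrix of `Y ↦ A * Y - Y * B` in the coordinates `Matrix.vec`. -/
def sylvesterMatrix {R : Type*} [CommRing R] (A : Matrix m m R) (B : Matrix n n R) :
    Matrix (n × m) (n × m) R :=
  1 ⊗ₖ A - Bᵀ ⊗ₖ 1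

lemma smul_sylvesterMatrix {R : Type*} [CommRing R] (c : R) (A : Matrix m m R)
    (B : Matrix n n R) : c • sylvesterMatrix A B = sylvesterMatrix (c • A) (c • B) := by
  rw [sylvesterMatrix, sylvesterMatrix, smul_sub, kronecker_smul, transpose_smul, smul_kronecker]

variable [Fintype m] [Fintype n]

lemma sylvesterMatrix_mulVec_vec {R : Type*} [CommRing R] (A : Matrix m m R) (B : Matrix n n R)
    (Y : Matrix m n R) : sylvesterMatrix A B *ᵥ vec Y = vec (A * Y - Y * B) := by
  rw [sylvesterMatrix, sub_mulVec, kronecker_mulVec_vec, kronecker_mulVec_vec, vec_sub,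
    transpose_one, transpose_transpose, Matrix.mul_one, Matrix.one_mul]

section Kronecker

variable {𝕂 : Type*} [RCLike 𝕂]

lemma exp_kronecker_one (A : Matrix m m 𝕂) : exp (A ⊗ₖ (1 : Matrix n n 𝕂)) = exp A ⊗ₖ 1 := by
  let f : Matrix m m 𝕂 →+* Matrix (m × n) (m × n) 𝕂 :=
    { toFun := (· ⊗ₖ 1)
      map_one' := one_kronecker_one
      map_mul' := fun A B => by rw [← mul_kronecker_mul, Matrix.one_mul]
      map_zero' := zero_kronecker _
      map_add' := fun A B => add_kronecker _ _ _ }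
  have hf : Continuous f := continuous_pi fun _ => continuous_pi fun _ =>
    ((continuous_apply _).comp (continuous_apply _)).mul continuous_const
  exact (open scoped Norms.Operator in map_exp f hf A).symm

lemma exp_one_kronecker (B : Matrix n n 𝕂) : exp ((1 : Matrix m m 𝕂) ⊗ₖ B) = 1 ⊗ₖ exp B := by
  let f : Matrix n n 𝕂 →+* Matrix (m × n) (m × n) 𝕂 :=
    { toFun := (1 ⊗ₖ ·)
      map_one' := one_kronecker_one
      map_mul' := fun A B => by rw [← mul_kronecker_mul, Matrix.one_mul]
      map_zero' := kronecker_zero _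
      map_add' := fun A B => kronecker_add _ _ _ }
  have hf : Continuous f := continuous_pi fun _ => continuous_pi fun _ =>
    continuous_const.mul ((continuous_apply _).comp (continuous_apply _))
  exact (open scoped Norms.Operator in map_exp f hf B).symm

lemma exp_sylvesterMatrix (A : Matrix m m 𝕂) (B : Matrix n n 𝕂) :
    exp (sylvesterMatrix A B) = (exp (-B))ᵀ ⊗ₖ exp A := by
  have hsum : sylvesterMatrix A B = 1 ⊗ₖ A + (-B)ᵀ ⊗ₖ 1 := by
    ext
    simp [sylvesterMatrix, sub_eq_add_neg]
  have hcomm : Commute (1 ⊗ₖ A) ((-B)ᵀ ⊗ₖ (1 : Matrix m m 𝕂)) := by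
    rw [Commute, SemiconjBy, ← mul_kronecker_mul, ← mul_kronecker_mul, Matrix.one_mul,
      Matrix.mul_one, Matrix.one_mul, Matrix.mul_one]
  rw [hsum, Matrix.exp_add_of_commute _ _ hcomm, exp_one_kronecker, exp_kronecker_one,
    ← mul_kronecker_mul, Matrix.one_mul, Matrix.mul_one, exp_transpose]

end Kronecker

open Polynomial in
lemma aeval_mul_eq_mul_aeval {R : Type*} [CommRing R] {A : Matrix m m R} {B : Matrix n n R}
    {Y : Matrix m n R} (h : A * Y = Y * B) (p : R[X]) : aeval A p * Y = Y * aeval B p := by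
  have hpow (k : ℕ) : A ^ k * Y = Y * B ^ k := by
    induction k with
    | zero => simp
    | succ k ih =>
      rw [pow_succ, Matrix.mul_assoc, h, ← Matrix.mul_assoc, ih, Matrix.mul_assoc, pow_succ]
  induction p using Polynomial.induction_on' with
  | add p q hp hq => rw [map_add, map_add, Matrix.add_mul, Matrix.mul_add, hp, hq]
  | monomial k a =>
    simp only [aeval_monomial, Algebra.algebraMap_eq_smul_one, smul_one_mul, Matrix.smul_mul,
      Matrix.mul_smul, hpow]

lemma exists_mem_spectrum_of_mul_eq_mul {K : Type*} [Field K] [IsAlgClosed K]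
    {A : Matrix m m K} {B : Matrix n n K} {Y : Matrix m n K} (hY : Y ≠ 0) (h : A * Y = Y * B) :
    ∃ μ ∈ spectrum K A, μ ∈ spectrum K B := by
  cases isEmpty_or_nonempty m
  · exact absurd (Subsingleton.elim Y 0) hY
  by_contra! hdisj
  have hdeg : 0 < A.charpoly.degree := by
    rw [charpoly_degree_eq_dim]
    exact_mod_cast Fintype.card_pos
  have hunit : IsUnit (Polynomial.aeval B A.charpoly) := by
    rw [← spectrum.zero_notMem_iff K, spectrum.map_polynomial_aeval_of_degree_pos B _ hdeg]
    rintro ⟨μ, hμB, hμ⟩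
    exact hdisj μ (mem_spectrum_iff_isRoot_charpoly.mpr hμ) hμB
  have hY0 : Y * Polynomial.aeval B A.charpoly = 0 := by
    rw [← aeval_mul_eq_mul_aeval h, aeval_self_charpoly, Matrix.zero_mul]
  apply hY
  rw [← Matrix.mul_one Y, ← mul_nonsing_inv _ ((isUnit_iff_isUnit_det _).mp hunit),
    ← Matrix.mul_assoc, hY0, Matrix.zero_mul]

lemma exists_sub_mem_spectrum_of_mem_spectrum_sylvesterMatrix {K : Type*} [Field K]
    [IsAlgClosed K] {A : Matrix m m K} {B : Matrix n n K} {μ : K}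
    (hμ : μ ∈ spectrum K (sylvesterMatrix A B)) : ∃ α ∈ spectrum K A, α - μ ∈ spectrum K B := by
  rw [← spectrum_toLin', ← Module.End.hasEigenvalue_iff_mem_spectrum] at hμ
  obtain ⟨v, hv⟩ := hμ.exists_hasEigenvector
  obtain ⟨Y, rfl⟩ := vec_bijective.surjective v
  have hY : Y ≠ 0 := fun h => hv.2 (by rw [h, vec_zero])
  have hAY : A * Y = Y * (algebraMap K _ μ + B) := by
    have h := hv.apply_eq_smul
    rw [toLin'_apply, sylvesterMatrix_mulVec_vec, ← vec_smul, vec_inj] at h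
    rw [Matrix.mul_add, Algebra.algebraMap_eq_smul_one, Matrix.mul_smul, Matrix.mul_one, ← h]
    abel
  obtain ⟨α, hαA, hαB⟩ := exists_mem_spectrum_of_mul_eq_mul hY hAY
  refine ⟨α, hαA, ?_⟩
  rwa [← sub_add_cancel α μ, spectrum.add_mem_add_iff] at hαB

lemma exprel_mulVec_of_mulVec_eq_smul {T : Matrix m m ℂ} {w : m → ℂ} {μ : ℂ}
    (h : T *ᵥ w = μ • w) : exprel T *ᵥ w = exprel μ • w := by
  have hpow (k : ℕ) : T ^ k *ᵥ w = μ ^ k • w := by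
    induction k with
    | zero => simp
    | succ k ih => rw [pow_succ', ← mulVec_mulVec, ih, mulVec_smul, h, smul_smul, pow_succ]
  have hT : Summable fun k : ℕ => ((k + 1)! : ℂ)⁻¹ • T ^ k :=
    open scoped Norms.Operator in summable_exprel T
  have hmap : exprel T *ᵥ w = ∑' k : ℕ, (((k + 1)! : ℂ)⁻¹ • T ^ k) *ᵥ w :=
    (hT.hasSum.map (mulVec.addMonoidHomLeft w)
      (continuous_id.matrix_mulVec continuous_const)).tsum_eq.symm
  rw [hmap, exprel, ← (summable_exprel μ).tsum_smul_const]
  simp only [smul_mulVec, hpow, smul_smul, smul_eq_mul]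

lemma injective_exprel_mulVec {T : Matrix m m ℂ}
    (hT : ∀ μ ∈ spectrum ℂ T, Complex.exp μ = 1 → μ = 0) :
    Function.Injective (exprel T).mulVec := by
  have hcomm : Commute T (exprel T) := open scoped Norms.Operator in commute_exprel T
  rw [← coe_mulVecLin, ← LinearMap.ker_eq_bot]
  by_contra hW
  set W := LinearMap.ker (exprel T).mulVecLin
  have : Nontrivial W := Submodule.nontrivial_iff_ne_bot.mpr hW
  have hTW : ∀ w ∈ W, T.mulVecLin w ∈ W := fun w hw => by
    simp only [W, LinearMap.mem_ker, mulVecLin_apply] at hw ⊢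
    rw [mulVec_mulVec, ← hcomm.eq, ← mulVec_mulVec, hw, mulVec_zero]
  obtain ⟨μ, hμ⟩ := Module.End.exists_eigenvalue (T.mulVecLin.restrict hTW)
  obtain ⟨⟨w, hwW⟩, hw⟩ := hμ.exists_hasEigenvector
  have hTw : T *ᵥ w = μ • w := congrArg Subtype.val hw.apply_eq_smul
  have hw0 : w ≠ 0 := fun h0 => hw.2 (Subtype.ext h0)
  have hμT : μ ∈ spectrum ℂ T := by
    rw [← spectrum_toLin', toLin'_apply', ← Module.End.hasEigenvalue_iff_mem_spectrum]
    exact Module.End.hasEigenvalue_of_hasEigenvector ⟨Module.End.mem_eigenspace_iff.mpr hTw, hw0⟩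
  have hμ0 : exprel μ = 0 := by
    have h : exprel μ • w = 0 := (exprel_mulVec_of_mulVec_eq_smul hTw).symm.trans hwW
    exact (smul_eq_zero.mp h).resolve_right hw0
  obtain ⟨hne, hexp⟩ := Complex.exp_eq_one_of_exprel_eq_zero hμ0
  exact hne (hT μ hμT hexp)

lemma mulVec_eq_zero_of_exp_mulVec_eq {T : Matrix m m ℂ}
    (hT : ∀ μ ∈ spectrum ℂ T, Complex.exp μ = 1 → μ = 0) {v : m → ℂ} (hv : exp T *ᵥ v = v) :
    T *ᵥ v = 0 := by
  have hexp : exprel T * T = exp T - 1 :=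
    open scoped Norms.Operator in (commute_exprel T).eq ▸ mul_exprel T
  apply injective_exprel_mulVec hT
  rw [mulVec_mulVec, hexp, sub_mulVec, hv, one_mulVec, sub_self, mulVec_zero]

end Matrix

theorem normLog_intertwine_general {r r' : ℕ}
    (G K : Matrix (Fin r) (Fin r) ℂ) (G' K' : Matrix (Fin r') (Fin r') ℂ)
    (hK : NormedSpace.exp (((2 * ↑Real.pi * Complex.I) : ℂ) • K) = G)
    (hK' : NormedSpace.exp (((2 * ↑Real.pi * Complex.I) : ℂ) • K') = G')
    (hKspec : ∀ μ ∈ spectrum ℂ K, μ.re ∈ Set.Ico (0 : ℝ) 1)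
    (hK'spec : ∀ μ ∈ spectrum ℂ K', μ.re ∈ Set.Ico (0 : ℝ) 1)
    (C : Matrix (Fin r) (Fin r') ℂ) (hC : G * C = C * G') :
    K * C = C * K' := by
  set c : ℂ := 2 * ↑Real.pi * Complex.I
  have hc : c ≠ 0 := by simp [c, Real.pi_ne_zero, I_ne_zero]
  have hfix : exp (c • sylvesterMatrix K K') *ᵥ vec C = vec C := by
    rw [smul_sylvesterMatrix, exp_sylvesterMatrix, kronecker_mulVec_vec, transpose_transpose, hK,
      hC, Matrix.mul_assoc, ← hK',
      ← Matrix.exp_add_of_commute _ _ (Commute.refl (c • K')).neg_right, add_neg_cancel,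
      NormedSpace.exp_zero, Matrix.mul_one]
  have hgap : ∀ μ ∈ spectrum ℂ (c • sylvesterMatrix K K'), Complex.exp μ = 1 → μ = 0 := by
    intro μ hμ hexp
    rw [← Units.val_mk0 hc, ← Units.smul_def, spectrum.unit_smul_eq_smul] at hμ
    obtain ⟨ν, hν, rfl⟩ := hμ
    obtain ⟨α, hα, hαν⟩ := exists_sub_mem_spectrum_of_mem_spectrum_sylvesterMatrix hν
    simp only [Units.val_mk0, smul_eq_mul] at hexp ⊢
    have : α = α - ν := exp_two_pi_I_mul_injOn (hKspec α hα) (hK'spec _ hαν) <| by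
      show Complex.exp (c * α) = Complex.exp (c * (α - ν))
      rw [mul_sub, Complex.exp_sub, hexp, div_one]
    rw [sub_eq_self.mp this.symm, mul_zero]
  have hzero := mulVec_eq_zero_of_exp_mulVec_eq hgap hfix
  rw [smul_mulVec, sylvesterMatrix_mulVec_vec, smul_eq_zero, vec_eq_zero_iff, sub_eq_zero] at hzero
  exact hzero.resolve_left hc

/-- If `K` and `K'` are the normalised logarithms of invertible matrices `G`, `G'`
(i.e. `exp (2πi K) = G` with all eigenvalues of `K` having real part in `[0,1)`),
and `C` intertwines `G` and `G'` (`G C = C G'`), then `C` intertwines `K` and `K'`. -/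
theorem normLog_intertwine {r r' : ℕ}
    (G K : Matrix (Fin r) (Fin r) ℂ) (G' K' : Matrix (Fin r') (Fin r') ℂ)
    (hG : IsUnit G.det) (hG' : IsUnit G'.det)
    (hK : NormedSpace.exp (((2 * ↑Real.pi * Complex.I) : ℂ) • K) = G)
    (hK' : NormedSpace.exp (((2 * ↑Real.pi * Complex.I) : ℂ) • K') = G')
    (hKspec : ∀ μ ∈ spectrum ℂ K, μ.re ∈ Set.Ico (0 : ℝ) 1)
    (hK'spec : ∀ μ ∈ spectrum ℂ K', μ.re ∈ Set.Ico (0 : ℝ) 1)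
    (C : Matrix (Fin r) (Fin r') ℂ) (hC : G * C = C * G') :
    K * C = C * K' :=
  normLog_intertwine_general G K G' K' hK hK' hKspec hK'spec C hC
end

section
/- If G and G' are commuting invertible complex r×r matrices, then their normalised logarithms norm log G and norm log G' commute. -/
/-!
Write `c = 2πi`. For every `μ`, the generalized `μ`-eigenspace `V` of `K` lies in the generalized
`exp (c μ)`-eigenspace of `G = exp (c K)`, and since `μ ↦ exp (c μ)` is injective on the strip
`0 ≤ re μ < 1` containing the spectrum of `K`, the two spaces coincide. Hence any `A` commuting
with `G` preserves `V`. On `V` write `K = μ + N` with `N` nilpotent: applied to vectors of `V`,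
`Gⁿ = exp (n c μ) exp (n c N)` is `exp (n c μ)` times a polynomial in `n` whose linear coefficient
is `c N`, so comparing coefficients in `A Gⁿ = Gⁿ A` for all `n ∈ ℕ` gives `A N = N A` on `V`.
As the generalized eigenspaces span, `A K = K A`. Apply this to `A = G'`, and then to `K` and
`G' = exp (c K')`.
-/

open Complex Matrix

open Finset Set

open Polynomial in
theorem Module.eq_zero_of_forall_sum_natCast_pow_smul_eq_zero {F V : Type*} [Field F]
    [CharZero F] [AddCommGroup V] [Module F V] {m : ℕ} {v : ℕ → V}
    (h : ∀ n : ℕ, ∑ k ∈ range m, (n : F) ^ k • v k = 0) {k : ℕ} (hk : k < m) : v k = 0 := by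
  rw [← Module.forall_dual_apply_eq_zero_iff F]
  intro ψ
  set p : F[X] := ∑ j ∈ range m, C (ψ (v j)) * X ^ j
  have hroots : range ((↑) : ℕ → F) ⊆ {x | p.IsRoot x} := by
    rintro _ ⟨n, rfl⟩
    have hn := congrArg ψ (h n)
    simp only [map_sum, map_smul, smul_eq_mul, map_zero] at hn
    simp only [p, IsRoot.def, eval_finsetSum, eval_mul, eval_C, eval_pow, eval_X, ← hn]
    exact Finset.sum_congr rfl fun j _ => mul_comm _ _
  have hp : p = 0 := eq_zero_of_infinite_isRoot p
    ((Set.infinite_range_of_injective Nat.cast_injective).mono hroots)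
  simpa [p, finsetSum_coeff, coeff_C_mul_X_pow, hk] using congrArg (coeff · k) hp

namespace Module.End

variable {K V : Type*} [Field K] [IsAlgClosed K] [AddCommGroup V] [Module K V]
  [FiniteDimensional K V]

theorem maxGenEigenspace_eq_of_commute_of_injOn {f g : End K V} (hfg : Commute f g)
    {φ : K → K} (hle : ∀ μ, f.maxGenEigenspace μ ≤ g.maxGenEigenspace (φ μ))
    (hφ : InjOn φ {μ | f.maxGenEigenspace μ ≠ ⊥}) {μ : K} (hμ : f.maxGenEigenspace μ ≠ ⊥) :
    g.maxGenEigenspace (φ μ) = f.maxGenEigenspace μ := by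
  refine le_antisymm ?_ (hle μ)
  set W := g.maxGenEigenspace (φ μ)
  have hW : ∀ x ∈ W, f x ∈ W := fun x hx => g.mapsTo_maxGenEigenspace_of_comm hfg.symm (φ μ) hx
  calc W = W ⊓ ⨆ ν, f.maxGenEigenspace ν := by rw [iSup_maxGenEigenspace_eq_top, inf_top_eq]
    _ = ⨆ ν, W ⊓ f.maxGenEigenspace ν := Submodule.inf_iSup_genEigenspace hW ⊤
    _ ≤ f.maxGenEigenspace μ := iSup_le fun ν => ?_
  by_cases hν : f.maxGenEigenspace ν = ⊥
  · simp [hν]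
  by_cases hνμ : ν = μ
  · exact hνμ ▸ inf_le_right
  have hne : φ μ ≠ φ ν := fun h => hνμ (hφ hμ hν h).symm
  exact ((g.disjoint_genEigenspace hne ⊤ ⊤).mono_right (hle ν)).eq_bot.le.trans bot_le

theorem commute_of_forall_mem_maxGenEigenspace {a f : End K V}
    (h : ∀ μ, ∀ y ∈ f.maxGenEigenspace μ, a (f y) = f (a y)) : Commute a f := by
  refine LinearMap.ext fun v => ?_
  have hv : v ∈ ⨆ μ, f.maxGenEigenspace μ := by rw [iSup_maxGenEigenspace_eq_top]; trivial
  induction hv using Submodule.iSup_induction' with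
  | mem μ y hy => exact h μ y hy
  | zero => simp
  | add x y _ _ hx hy => simp only [mul_apply, map_add] at hx hy ⊢; rw [hx, hy]

end Module.End

theorem Complex.injOn_exp_two_pi_I_mul :
    InjOn (fun μ : ℂ => Complex.exp (2 * Real.pi * I * μ)) {μ | μ.re ∈ Ico (0 : ℝ) 1} := by
  rintro μ₁ ⟨h₁₀, h₁₁⟩ μ₂ ⟨h₂₀, h₂₁⟩ h
  obtain ⟨n, hn⟩ := Complex.exp_eq_exp_iff_exists_int.1 h
  have hμ : μ₁ = μ₂ + n := mul_left_cancel₀ two_pi_I_ne_zero (by rw [hn]; ring)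
  have hre : μ₁.re = μ₂.re + n := by simp [hμ]
  have hn0 : n = 0 := by
    have : (n : ℝ) < 1 := by linarith
    have : (-1 : ℝ) < n := by linarith
    norm_cast at *
    omega
  simp [hμ, hn0]

namespace Matrix

variable {ι : Type*} [Fintype ι] [DecidableEq ι]

section Exp

attribute [local instance] Matrix.linftyOpNormedRing Matrix.linftyOpNormedAlgebra

theorem exp_mulVec_eq_sum {𝕜 : Type*} [RCLike 𝕜] {N : Matrix ι ι 𝕜} {m : ℕ} {y : ι → 𝕜}
    (hy : N ^ m *ᵥ y = 0) :
    NormedSpace.exp N *ᵥ y = ∑ k ∈ range m, (k.factorial : 𝕜)⁻¹ • (N ^ k *ᵥ y) := by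
  have hsum := (NormedSpace.exp_series_hasSum_exp' (𝕂 := 𝕜) N).map (mulVec.addMonoidHomLeft y)
    (continuous_id.matrix_mulVec continuous_const)
  replace hsum :
      HasSum (fun k => (k.factorial : 𝕜)⁻¹ • (N ^ k *ᵥ y)) (NormedSpace.exp N *ᵥ y) := by
    simp only [Function.comp_def, mulVec.addMonoidHomLeft, AddMonoidHom.coe_mk, ZeroHom.coe_mk,
      smul_mulVec] at hsum
    exact hsum
  refine hsum.unique (hasSum_sum_of_ne_finset_zero fun k hk => ?_)
  rw [Finset.mem_range, not_lt] at hk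
  simp [← pow_sub_mul_pow N hk, ← mulVec_mulVec, hy]

theorem exp_eq_exp_smul_exp_sub (K : Matrix ι ι ℂ) (μ : ℂ) :
    NormedSpace.exp K = Complex.exp μ • NormedSpace.exp (K - μ • 1) := by
  have hsplit : K = algebraMap ℂ _ μ + (K - μ • 1) := by
    rw [Algebra.algebraMap_eq_smul_one]; abel
  have hscalar :
      NormedSpace.exp (algebraMap ℂ (Matrix ι ι ℂ) μ) = algebraMap ℂ _ (Complex.exp μ) := by
    rw [Complex.exp_eq_exp_ℂ]; exact (NormedSpace.algebraMap_exp_comm μ).symm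
  conv_lhs => rw [hsplit]
  rw [exp_add_of_commute _ _ (Algebra.commute_algebraMap_left _ _), hscalar, ← Algebra.smul_def]

end Exp

theorem exp_mulVec_of_mulVec_eq_smul {K : Matrix ι ι ℂ} {μ : ℂ} {w : ι → ℂ}
    (hw : K *ᵥ w = μ • w) : NormedSpace.exp K *ᵥ w = Complex.exp μ • w := by
  have hN : (K - μ • 1) ^ 1 *ᵥ w = 0 := by
    rw [pow_one, sub_mulVec, hw, smul_mulVec, one_mulVec, sub_self]
  rw [exp_eq_exp_smul_exp_sub K μ, smul_mulVec, exp_mulVec_eq_sum hN]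
  simp

theorem exp_sub_pow_mulVec_eq_zero {K : Matrix ι ι ℂ} {μ : ℂ} {m : ℕ} {y : ι → ℂ}
    (hy : (K - μ • 1) ^ m *ᵥ y = 0) :
    (NormedSpace.exp K - Complex.exp μ • 1) ^ m *ᵥ y = 0 := by
  induction m generalizing y with
  | zero => simpa using hy
  | succ m ih =>
    -- `exp K - exp μ` kills the eigenvector `(K - μ) ^ m y`, so it maps `y` into the kernel
    -- of `(K - μ) ^ m`.
    set w := (K - μ • 1) ^ m *ᵥ y
    have hw : K *ᵥ w = μ • w := by
      have h : (K - μ • 1) *ᵥ w = 0 := by rw [mulVec_mulVec, ← pow_succ', hy]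
      rwa [sub_mulVec, smul_mulVec, one_mulVec, sub_eq_zero] at h
    have hcomm : Commute (K - μ • 1) (NormedSpace.exp K - Complex.exp μ • 1) :=
      ((Commute.refl K).exp_right.sub_right ((Commute.one_right K).smul_right _)).sub_left
        ((Commute.one_left _).smul_left μ)
    rw [pow_succ, ← mulVec_mulVec]
    refine ih ?_
    rw [mulVec_mulVec, (hcomm.pow_left m).eq, ← mulVec_mulVec, sub_mulVec,
      exp_mulVec_of_mulVec_eq_smul hw, smul_mulVec, one_mulVec, sub_self]

theorem mem_maxGenEigenspace_toLin'_iff {𝕜 : Type*} [Field 𝕜] {M : Matrix ι ι 𝕜} {μ : 𝕜}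
    {y : ι → 𝕜} : y ∈ Module.End.maxGenEigenspace (toLin' M) μ ↔
      (M - μ • 1) ^ Fintype.card ι *ᵥ y = 0 := by
  have h : (toLin' M - μ • 1) ^ Fintype.card ι = toLin' ((M - μ • 1) ^ Fintype.card ι) := by
    change (toLinAlgEquiv' M - μ • 1) ^ _ = toLinAlgEquiv' _
    rw [map_pow, map_sub, map_smul, map_one]
  rw [Module.End.maxGenEigenspace_eq_genEigenspace_finrank, Module.finrank_fintype_fun_eq_card,
    Module.End.mem_genEigenspace_nat, LinearMap.mem_ker, h, toLin'_apply]

theorem maxGenEigenspace_toLin'_le_exp (K : Matrix ι ι ℂ) (μ : ℂ) :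
    Module.End.maxGenEigenspace (toLin' K) μ ≤
      Module.End.maxGenEigenspace (toLin' (NormedSpace.exp K)) (Complex.exp μ) := fun _ hy =>
  mem_maxGenEigenspace_toLin'_iff.2
    (exp_sub_pow_mulVec_eq_zero (mem_maxGenEigenspace_toLin'_iff.1 hy))

theorem mulVec_mulVec_comm_of_commute_exp {A K : Matrix ι ι ℂ} {μ : ℂ} {m : ℕ}
    {y : ι → ℂ} (hA : Commute A (NormedSpace.exp K)) (hy : (K - μ • 1) ^ m *ᵥ y = 0)
    (hAy : (K - μ • 1) ^ m *ᵥ (A *ᵥ y) = 0) : A *ᵥ (K *ᵥ y) = K *ᵥ (A *ᵥ y) := by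
  set N := K - μ • 1
  -- Summing up to `m + 2` rather than `m` keeps the coefficient of `n ^ 1` even when `m ≤ 1`.
  have hpow (n : ℕ) {z : ι → ℂ} (hz : N ^ m *ᵥ z = 0) :
      NormedSpace.exp K ^ n *ᵥ z = Complex.exp (n * μ) •
        ∑ k ∈ range (m + 2), (n : ℂ) ^ k • ((k.factorial : ℂ)⁻¹ • (N ^ k *ᵥ z)) := by
    have hz' : ((n : ℂ) • N) ^ (m + 2) *ᵥ z = 0 := by
      rw [smul_pow, smul_mulVec, add_comm, pow_add N, ← mulVec_mulVec, hz, mulVec_zero,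
        smul_zero]
    have hnK : n • K - ((n : ℂ) * μ) • 1 = (n : ℂ) • N := by
      rw [smul_sub, smul_smul, Nat.cast_smul_eq_nsmul]
    rw [← exp_nsmul, exp_eq_exp_smul_exp_sub _ (n * μ), hnK, smul_mulVec, exp_mulVec_eq_sum hz']
    simp only [smul_pow, smul_mulVec, smul_comm ((n : ℂ) ^ _)]
  have hcoeff (n : ℕ) : ∑ k ∈ range (m + 2), (n : ℂ) ^ k •
      ((k.factorial : ℂ)⁻¹ • (A *ᵥ (N ^ k *ᵥ y) - N ^ k *ᵥ (A *ᵥ y))) = 0 := by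
    have h := congrArg (· *ᵥ y) (hA.pow_right n).eq
    simp only [← mulVec_mulVec, hpow n hy, hpow n hAy, mulVec_smul, mulVec_sum] at h
    simp only [smul_sub, sum_sub_distrib, smul_right_injective _ (Complex.exp_ne_zero _) h,
      sub_self]
  have hN : A *ᵥ (N *ᵥ y) = N *ᵥ (A *ᵥ y) := by
    simpa [sub_eq_zero] using Module.eq_zero_of_forall_sum_natCast_pow_smul_eq_zero hcoeff
      (k := 1) (by omega)
  have hK : K = N + μ • 1 := (sub_add_cancel K _).symm
  rw [hK, add_mulVec, add_mulVec, mulVec_add, hN, smul_mulVec, smul_mulVec, one_mulVec,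
    one_mulVec, mulVec_smul]

theorem commute_of_commute_exp {A K : Matrix ι ι ℂ} (hK : InjOn Complex.exp (spectrum ℂ K))
    (hA : Commute A (NormedSpace.exp K)) : Commute A K := by
  set f : Module.End ℂ (ι → ℂ) := toLin' K
  have hinj : InjOn Complex.exp {μ | f.maxGenEigenspace μ ≠ ⊥} := hK.mono fun μ hμ => by
    rw [← spectrum_toLin']
    exact ((show f.HasUnifEigenvalue μ ⊤ from hμ).lt zero_lt_one).mem_spectrum
  have hAexp : Commute (toLin' A) (toLin' (NormedSpace.exp K)) := hA.map toLinAlgEquiv'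
  have hexp : Commute f (toLin' (NormedSpace.exp K)) :=
    (Commute.refl K).exp_right.map toLinAlgEquiv'
  have hlin : Commute (toLin' A) f := Module.End.commute_of_forall_mem_maxGenEigenspace
    fun μ y hy => by
      by_cases hμ : f.maxGenEigenspace μ = ⊥
      · rw [hμ, Submodule.mem_bot] at hy
        simp [hy]
      have hV := Module.End.maxGenEigenspace_eq_of_commute_of_injOn hexp
        (maxGenEigenspace_toLin'_le_exp K) hinj hμ
      have hAy : toLin' A y ∈ f.maxGenEigenspace μ := by
        rw [← hV] at hy ⊢
        exact Module.End.mapsTo_maxGenEigenspace_of_comm hAexp.symm _ hy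
      simp only [toLin'_apply] at hAy ⊢
      exact mulVec_mulVec_comm_of_commute_exp hA (mem_maxGenEigenspace_toLin'_iff.1 hy)
        (mem_maxGenEigenspace_toLin'_iff.1 hAy)
  have hback (M : Matrix ι ι ℂ) : LinearMap.toMatrixAlgEquiv' (toLin' M) = M :=
    LinearMap.toMatrixAlgEquiv'_toLinAlgEquiv' M
  simpa only [f, hback] using hlin.map LinearMap.toMatrixAlgEquiv'

theorem commute_of_commute_exp_two_pi_I_smul {A K : Matrix ι ι ℂ}
    (hK : ∀ μ ∈ spectrum ℂ K, μ.re ∈ Ico (0 : ℝ) 1)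
    (hA : Commute A (NormedSpace.exp ((2 * ↑Real.pi * Complex.I : ℂ) • K))) : Commute A K := by
  have hspec : spectrum ℂ ((2 * ↑Real.pi * Complex.I : ℂ) • K) =
      (fun μ => 2 * Real.pi * I * μ) '' spectrum ℂ K := by
    rw [← Units.val_mk0 two_pi_I_ne_zero, ← Units.smul_def, spectrum.unit_smul_eq_smul]
    rfl
  have hinj : InjOn Complex.exp (spectrum ℂ ((2 * ↑Real.pi * Complex.I : ℂ) • K)) :=
    hspec ▸ (Complex.injOn_exp_two_pi_I_mul.mono hK).image_of_comp
  exact (Commute.smul_right_iff₀ two_pi_I_ne_zero).1 (commute_of_commute_exp hinj hA)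

end Matrix

theorem normLog_commute_general {r : ℕ}
    (G G' K K' : Matrix (Fin r) (Fin r) ℂ)
    (hK : NormedSpace.exp (((2 * ↑Real.pi * Complex.I) : ℂ) • K) = G)
    (hK' : NormedSpace.exp (((2 * ↑Real.pi * Complex.I) : ℂ) • K') = G')
    (hKspec : ∀ μ ∈ spectrum ℂ K, μ.re ∈ Set.Ico (0 : ℝ) 1)
    (hK'spec : ∀ μ ∈ spectrum ℂ K', μ.re ∈ Set.Ico (0 : ℝ) 1)
    (hcomm : G * G' = G' * G) :
    K * K' = K' * K := by
  have hG'K : Commute G' K := commute_of_commute_exp_two_pi_I_smul hKspec (hK ▸ hcomm.symm)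
  exact commute_of_commute_exp_two_pi_I_smul hK'spec (hK' ▸ hG'K.symm)

/-- The normalised logarithms of commuting invertible matrices commute. -/
theorem normLog_commute {r : ℕ}
    (G G' K K' : Matrix (Fin r) (Fin r) ℂ)
    (hG : IsUnit G.det) (hG' : IsUnit G'.det)
    (hK : NormedSpace.exp (((2 * ↑Real.pi * Complex.I) : ℂ) • K) = G)
    (hK' : NormedSpace.exp (((2 * ↑Real.pi * Complex.I) : ℂ) • K') = G')
    (hKspec : ∀ μ ∈ spectrum ℂ K, μ.re ∈ Set.Ico (0 : ℝ) 1)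
    (hK'spec : ∀ μ ∈ spectrum ℂ K', μ.re ∈ Set.Ico (0 : ℝ) 1)
    (hcomm : G * G' = G' * G) :
    K * K' = K' * K :=
  normLog_commute_general G G' K K' hK hK' hKspec hK'spec hcomm
end

section
/- Let G_1, ..., G_n be pairwise commuting invertible complex r×r matrices with G_1 ··· G_n = I, such that each G_j is upper-triangular with a single eigenvalue ρ_j. Let K_j = norm log G_j with unique eigenvalue μ_j, and set ξ = ∑_j μ_j. Then ξ is a nonnegative integer and ξ·I − ∑_j K_j = 0. -/
/-!
Write `K_j = μ_j + N_j` with `N_j` nilpotent, so that `G_j = e^{2πiμ_j} exp(2πi N_j)` is a scalar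
times a unipotent matrix. For nilpotent `a` one has `exp a - 1 = u a` with `u` invertible; applied
to `ad a` this shows that whatever commutes with `exp a` commutes with `a`, so the `N_j` commute and
`I = ∏ G_j = e^{2πiξ} exp(2πi ∑ N_j)`. A unipotent scalar is `1`, hence `e^{2πiξ} = 1` and
`exp(2πi ∑ N_j) = I`, which forces `∑ N_j = 0`. Finally `ξ ∈ ℤ` and `Re ξ ≥ 0` give `ξ ∈ ℕ`.
-/

open Complex Matrix Finset
open scoped Nat

namespace IsNilpotent

variable {A : Type*} [Ring A] [Algebra ℚ A]

theorem exists_isUnit_exp_sub_one_eq_mul {a : A} (ha : IsNilpotent a) :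
    ∃ u, IsUnit u ∧ exp a - 1 = u * a := by
  obtain ⟨k, hk⟩ := ha
  set v := ∑ i ∈ range k, ((i + 2)! : ℚ)⁻¹ • a ^ i
  have hva : Commute v a :=
    Commute.sum_left _ _ _ fun i _ => ((Commute.refl a).pow_left i).smul_left _
  refine ⟨v * a + 1, (hva.isNilpotent_mul_left ⟨k, hk⟩).isUnit_add_one, ?_⟩
  rw [exp_eq_sum (pow_eq_zero_of_le (by omega : k ≤ k + 2) hk), sum_range_succ', sum_range_succ']
  simp [v, add_mul, sum_mul, ← _root_.pow_succ]

theorem eq_zero_of_exp_eq_one {a : A} (ha : IsNilpotent a) (h : exp a = 1) : a = 0 := by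
  obtain ⟨u, hu, hexp⟩ := exists_isUnit_exp_sub_one_eq_mul ha
  rwa [h, sub_self, eq_comm, hu.mul_right_eq_zero] at hexp

theorem exp_mulLeft {a : A} (ha : IsNilpotent a) (x : A) :
    exp (LinearMap.mulLeft ℚ a) x = exp a * x := by
  obtain ⟨k, hk⟩ := ha
  have hk' : LinearMap.mulLeft ℚ a ^ k = 0 := by
    rw [LinearMap.pow_mulLeft, hk, LinearMap.mulLeft_zero_eq_zero]
  simp [exp_eq_sum hk, exp_eq_sum hk', LinearMap.pow_mulLeft, sum_mul]

theorem exp_mulRight {a : A} (ha : IsNilpotent a) (x : A) :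
    exp (LinearMap.mulRight ℚ a) x = x * exp a := by
  obtain ⟨k, hk⟩ := ha
  have hk' : LinearMap.mulRight ℚ a ^ k = 0 := by
    rw [LinearMap.pow_mulRight, hk, LinearMap.mulRight_zero_eq_zero]
  simp [exp_eq_sum hk, exp_eq_sum hk', LinearMap.pow_mulRight, mul_sum]

/-- `exp (ad a)` is conjugation by `exp a`, so it fixes `b`; as `exp (ad a) - 1 = u * ad a`
with `u` invertible, `ad a` kills `b`. -/
theorem commute_of_commute_exp {a b : A} (ha : IsNilpotent a) (h : Commute b (exp a)) :
    Commute b a := by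
  set L := LinearMap.mulLeft ℚ a
  set R := LinearMap.mulRight ℚ (-a)
  have hL : IsNilpotent L := (LinearMap.isNilpotent_mulLeft_iff ℚ a).mpr ha
  have hR : IsNilpotent R := (LinearMap.isNilpotent_mulRight_iff ℚ (-a)).mpr ha.neg
  have hLR : Commute L R := LinearMap.commute_mulLeft_right a (-a)
  have hfix : exp (L + R) b = b := by
    rw [exp_add_of_commute hLR hL hR, Module.End.mul_apply, exp_mulRight ha.neg, exp_mulLeft ha,
      ← mul_assoc, ← h.eq, mul_assoc, exp_mul_exp_neg_self ha, mul_one]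
  obtain ⟨u, hu, hexp⟩ := exists_isUnit_exp_sub_one_eq_mul (hLR.isNilpotent_add hL hR)
  have hub : u ((L + R) b) = 0 := by
    rw [← Module.End.mul_apply, ← hexp, LinearMap.sub_apply, hfix, Module.End.one_apply, sub_self]
  have hab : a * b + b * -a = 0 :=
    (Module.End.isUnit_iff u |>.mp hu).injective (by rw [map_zero, ← hub]; rfl)
  simpa [Commute, SemiconjBy, add_neg_eq_zero, eq_comm] using hab

theorem commute_of_commute_exp_exp {a b : A} (ha : IsNilpotent a) (hb : IsNilpotent b)
    (h : Commute (exp a) (exp b)) : Commute a b :=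
  (commute_of_commute_exp ha (commute_of_commute_exp hb h).symm).symm

end IsNilpotent

theorem eq_one_of_smul_eq_one_of_isNilpotent_sub_one {K A : Type*} [Field K] [Ring A]
    [Nontrivial A] [Algebra K A] {s : K} {u : A} (hu : IsNilpotent (u - 1)) (h : s • u = 1) :
    s = 1 ∧ u = 1 := by
  have hs : IsNilpotent (algebraMap K A (1 - s)) := by
    have : algebraMap K A (1 - s) = s • (u - 1) := by
      rw [smul_sub, h, map_sub, map_one, Algebra.algebraMap_eq_smul_one]
    exact this ▸ hu.smul s
  have hs1 : s = 1 :=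
    (sub_eq_zero.mp ((IsNilpotent.map_iff (algebraMap K A).injective).mp hs).eq_zero).symm
  exact ⟨hs1, by rwa [hs1, one_smul] at h⟩

theorem NormedSpace.exp_eq_isNilpotent_exp {A : Type*} [Ring A] [Algebra ℚ A]
    [TopologicalSpace A] [IsTopologicalRing A] {a : A} (ha : IsNilpotent a) :
    NormedSpace.exp a = IsNilpotent.exp a := by
  obtain ⟨k, hk⟩ := ha
  rw [exp_eq_tsum_rat, IsNilpotent.exp_eq_sum hk]
  exact tsum_eq_sum fun i hi => by rw [pow_eq_zero_of_le (by simpa using hi) hk, smul_zero]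

theorem Complex.exists_nat_eq_of_exp_two_pi_I_mul_eq_one {z : ℂ}
    (h : exp (2 * Real.pi * I * z) = 1) (hz : 0 ≤ z.re) : ∃ m : ℕ, z = m := by
  obtain ⟨k, hk⟩ := exp_eq_one_iff.mp h
  have hzk : z = k := mul_left_cancel₀ two_pi_I_ne_zero (by rw [hk, mul_comm])
  lift k to ℕ using by simpa [hzk] using hz
  exact ⟨k, by simpa using hzk⟩

namespace Matrix

variable {m : Type*} [Fintype m] [DecidableEq m]

theorem isNilpotent_sub_smul_one_of_spectrum_eq {K : Type*} [Field K] [IsAlgClosed K]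
    {A : Matrix m m K} {μ : K} (hA : spectrum K A = {μ}) : IsNilpotent (A - μ • 1) := by
  have hroots : A.charpoly.roots = Multiset.replicate (Fintype.card m) μ := by
    refine Multiset.eq_replicate.mpr ⟨?_, fun z hz => ?_⟩
    · rw [← (IsAlgClosed.splits A.charpoly).natDegree_eq_card_roots, charpoly_natDegree_eq_dim]
    · have : z ∈ spectrum K A :=
        mem_spectrum_of_isRoot_charpoly (Polynomial.isRoot_of_mem_roots hz)
      rwa [hA] at this
  have hchar : A.charpoly = (Polynomial.X - Polynomial.C μ) ^ Fintype.card m := by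
    rw [(IsAlgClosed.splits A.charpoly).eq_prod_roots_of_monic A.charpoly_monic, hroots,
      Multiset.map_replicate, Multiset.prod_replicate]
  refine ⟨Fintype.card m, ?_⟩
  simpa [hchar, Algebra.algebraMap_eq_smul_one] using A.aeval_self_charpoly

theorem exp_smul_one (z : ℂ) : NormedSpace.exp (z • 1 : Matrix m m ℂ) = Complex.exp z • 1 := by
  rw [smul_one_eq_diagonal, exp_diagonal, Pi.exp_def, smul_one_eq_diagonal, Complex.exp_eq_exp_ℂ]

theorem exp_eq_smul_isNilpotent_exp {A : Matrix m m ℂ} {a : ℂ} (hA : IsNilpotent (A - a • 1)) :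
    NormedSpace.exp A = Complex.exp a • IsNilpotent.exp (A - a • 1) := by
  conv_lhs => rw [← add_sub_cancel (a • (1 : Matrix m m ℂ)) A]
  rw [exp_add_of_commute _ _ ((Commute.one_left _).smul_left a), exp_smul_one,
    NormedSpace.exp_eq_isNilpotent_exp hA, smul_one_mul]

theorem commute_of_commute_exp_s3 {A B : Matrix m m ℂ} {a b : ℂ} (hA : IsNilpotent (A - a • 1))
    (hB : IsNilpotent (B - b • 1)) (h : Commute (NormedSpace.exp A) (NormedSpace.exp B)) :
    Commute A B := by
  rw [exp_eq_smul_isNilpotent_exp hA, exp_eq_smul_isNilpotent_exp hB,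
    Commute.smul_left_iff₀ (Complex.exp_ne_zero _),
    Commute.smul_right_iff₀ (Complex.exp_ne_zero _)] at h
  have hscalar (z : ℂ) (X : Matrix m m ℂ) : Commute (z • 1) X := (Commute.one_left X).smul_left z
  rw [← sub_add_cancel A (a • 1), ← sub_add_cancel B (b • 1)]
  exact ((IsNilpotent.commute_of_commute_exp_exp hA hB h).add_right (hscalar _ _).symm).add_left
    ((hscalar _ _).add_right (hscalar _ _))

theorem prod_ofFn_exp {𝔸 : Type*} [NormedRing 𝔸] [NormedAlgebra ℚ 𝔸] [CompleteSpace 𝔸] {n : ℕ}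
    (A : Fin n → Matrix m m 𝔸) (hA : ∀ i j, Commute (A i) (A j)) :
    (List.ofFn fun i => NormedSpace.exp (A i)).prod = NormedSpace.exp (∑ i, A i) := by
  induction n with
  | zero => simp
  | succ n ih =>
    rw [List.ofFn_succ, List.prod_cons, ih _ fun i j => hA _ _, Fin.sum_univ_succ,
      exp_add_of_commute _ _ (Commute.sum_right _ _ _ fun j _ => hA 0 j.succ)]

theorem sum_eq_smul_one_of_prod_exp_eq_one [Nonempty m] {n : ℕ} (A : Fin n → Matrix m m ℂ)
    (a : Fin n → ℂ) (hA : ∀ j, IsNilpotent (A j - a j • 1))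
    (hcomm : ∀ i j, Commute (NormedSpace.exp (A i)) (NormedSpace.exp (A j)))
    (hprod : (List.ofFn fun j => NormedSpace.exp (A j)).prod = 1) :
    Complex.exp (∑ j, a j) = 1 ∧ ∑ j, A j = (∑ j, a j) • 1 := by
  have hAcomm i j : Commute (A i) (A j) := commute_of_commute_exp_s3 (hA i) (hA j) (hcomm i j)
  have hS : IsNilpotent (∑ j, A j - (∑ j, a j) • 1) := by
    rw [sum_smul, ← sum_sub_distrib]
    refine Commute.isNilpotent_sum (fun j _ => hA j) fun i j _ _ => ?_
    exact ((hAcomm i j).sub_right ((Commute.one_right _).smul_right _)).sub_left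
      (((Commute.one_left _).smul_left _).sub_right ((Commute.one_left _).smul_left _))
  rw [prod_ofFn_exp A hAcomm, exp_eq_smul_isNilpotent_exp hS] at hprod
  obtain ⟨hexp, hunip⟩ := eq_one_of_smul_eq_one_of_isNilpotent_sub_one
    (IsNilpotent.isNilpotent_exp_sub_one hS) hprod
  exact ⟨hexp, sub_eq_zero.mp (IsNilpotent.eq_zero_of_exp_eq_one hS hunip)⟩

end Matrix

theorem sum_normLog_of_product_one_general {n r : ℕ}
    (G K : Fin n → Matrix (Fin r) (Fin r) ℂ) (μ : Fin n → ℂ)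
    (hcomm : ∀ j k, G j * G k = G k * G j)
    (hprod : (List.ofFn G).prod = 1)
    (hK : ∀ j, NormedSpace.exp (((2 * ↑Real.pi * Complex.I) : ℂ) • K j) = G j)
    (hKspec : ∀ j, spectrum ℂ (K j) = {μ j})
    (hμre : ∀ j, (μ j).re ∈ Set.Ico (0 : ℝ) 1) :
    (∃ m : ℕ, (∑ j, μ j) = (m : ℂ)) ∧
      (∑ j, μ j) • (1 : Matrix (Fin r) (Fin r) ℂ) - ∑ j, K j = 0 := by
  set c : ℂ := 2 * ↑Real.pi * Complex.I
  rcases isEmpty_or_nonempty (Fin n) with hn | ⟨⟨j₀⟩⟩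
  · exact ⟨⟨0, by simp⟩, by simp⟩
  have : Nonempty (Fin r) := by
    by_contra h
    rw [not_nonempty_iff] at h
    simpa [spectrum.of_subsingleton] using hKspec j₀
  have hnil j : IsNilpotent (c • K j - (c * μ j) • 1) := by
    simpa [smul_sub, smul_smul] using (isNilpotent_sub_smul_one_of_spectrum_eq (hKspec j)).smul c
  obtain ⟨hexp, hsum⟩ := sum_eq_smul_one_of_prod_exp_eq_one (fun j => c • K j) _ hnil
    (fun j k => by rw [hK, hK]; exact hcomm j k) (by simpa only [hK] using hprod)
  rw [← mul_sum] at hexp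
  have hcsum : c • ∑ j, K j = c • ((∑ j, μ j) • 1) := by rw [smul_sum, hsum, ← mul_sum, smul_smul]
  refine ⟨exists_nat_eq_of_exp_two_pi_I_mul_eq_one hexp ?_, ?_⟩
  · simpa [re_sum] using sum_nonneg fun j _ => (hμre j).1
  · rw [smul_right_injective _ two_pi_I_ne_zero hcsum, sub_self]

/-- For pairwise commuting invertible upper-triangular matrices `G j`, each with
single eigenvalue `ρ j`, whose product is the identity, the sum `ξ` of the unique
eigenvalues `μ j` of the normalised logarithms `K j` is a nonnegative integer and
`ξ • 1 - ∑ K j = 0`. -/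
theorem sum_normLog_of_product_one {n r : ℕ}
    (G K : Fin n → Matrix (Fin r) (Fin r) ℂ) (ρ μ : Fin n → ℂ)
    (hGunit : ∀ j, IsUnit (G j).det)
    (hGtri : ∀ j, (G j).BlockTriangular (id : Fin r → Fin r))
    (hGspec : ∀ j, spectrum ℂ (G j) = {ρ j})
    (hcomm : ∀ j k, G j * G k = G k * G j)
    (hprod : (List.ofFn G).prod = 1)
    (hK : ∀ j, NormedSpace.exp (((2 * ↑Real.pi * Complex.I) : ℂ) • K j) = G j)
    (hKspec : ∀ j, spectrum ℂ (K j) = {μ j})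
    (hμre : ∀ j, (μ j).re ∈ Set.Ico (0 : ℝ) 1) :
    (∃ m : ℕ, (∑ j, μ j) = (m : ℂ)) ∧
      (∑ j, μ j) • (1 : Matrix (Fin r) (Fin r) ℂ) - ∑ j, K j = 0 :=
  sum_normLog_of_product_one_general G K μ hcomm hprod hK hKspec hμre
end

section
/- Let (c_j)_{j≥1} be a sequence of nonnegative reals and c_0 ≥ 2 an integer, and suppose there exist C > 1 and ε_0 > 0 with c_j ε_0^j < C for all j ≥ 1. Let (m_j)_{j≥0} be nonnegative reals satisfying (j − c_0) m_j ≤ ∑_{k=0}^{j−1} m_k c_{j−k} for all j > c_0. Then for any δ ≤ ε_0/(2C), setting D = ∑_{k=0}^{c_0} m_k δ^k, one has m_j δ^j ≤ D·2^{c_0 − j} for all j ≥ c_0; in particular the power series ∑ m_j z^j has positive radius of convergence. -/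
/-!
With `a j = m j * δ ^ j` and `b n = c n * δ ^ n`, the choice of `δ` gives `b n ≤ 2⁻ⁿ`, and the
recurrence becomes `(j - c₀) a j ≤ ∑_{k<j} a k b (j - k)`. By strong induction on `j`, the terms
with `k ≤ c₀` contribute at most `D 2^{c₀-j}` in total, and each of the `j - c₀ - 1` terms with
`c₀ < k < j` contributes at most `D 2^{c₀-k} 2^{k-j} = D 2^{c₀-j}`; so the right-hand side is at
most `(j - c₀) D 2^{c₀-j}`. Summability follows by comparison with a geometric series.
-/

open Finset

lemma mul_pow_le_half_pow {x ε C δ : ℝ} {n : ℕ} (hn : n ≠ 0) (hx : 0 ≤ x) (hC : 1 ≤ C)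
    (hxC : x * ε ^ n ≤ C) (hδ0 : 0 ≤ δ) (hδ : δ ≤ ε / (2 * C)) :
    x * δ ^ n ≤ (1 / 2) ^ n := by
  have hC0 : 0 < C := by linarith
  have h2Cδ : 2 * C * δ ≤ ε := by rwa [le_div_iff₀' (by positivity)] at hδ
  have key : x * δ ^ n * 2 ^ n * C ^ n ≤ 1 * C ^ n :=
    calc x * δ ^ n * 2 ^ n * C ^ n = x * (2 * C * δ) ^ n := by ring
      _ ≤ x * ε ^ n := by gcongr
      _ ≤ C := hxC
      _ ≤ C ^ n := le_self_pow₀ hC hn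
      _ = 1 * C ^ n := (one_mul _).symm
  rw [div_pow, one_pow, le_div_iff₀ (by positivity)]
  exact le_of_mul_le_mul_right key (by positivity)

lemma sum_mul_mul_sub_mul_pow {R : Type*} [CommSemiring R] (u v : ℕ → R) (δ : R) (j : ℕ) :
    (∑ k ∈ range j, u k * v (j - k)) * δ ^ j =
      ∑ k ∈ range j, (u k * δ ^ k) * (v (j - k) * δ ^ (j - k)) := by
  rw [sum_mul]
  refine sum_congr rfl fun k hk => ?_
  rw [← pow_mul_pow_sub δ (mem_range.mp hk).le]
  ring

section ConvolutionBound

variable {a : ℕ → ℝ} {N : ℕ} {r : ℝ}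

lemma sum_mul_pow_sub_le (ha : ∀ j, 0 ≤ a j) (hr0 : 0 ≤ r) (hr1 : r ≤ 1) {j : ℕ} (hNj : N < j)
    (ih : ∀ k, N < k → k < j → a k ≤ (∑ i ∈ range (N + 1), a i) * r ^ (k - N)) :
    ∑ k ∈ range j, a k * r ^ (j - k) ≤
      ((j : ℝ) - N) * ((∑ i ∈ range (N + 1), a i) * r ^ (j - N)) := by
  set D := ∑ i ∈ range (N + 1), a i
  have head : ∑ k ∈ range (N + 1), a k * r ^ (j - k) ≤ D * r ^ (j - N) := by
    rw [sum_mul]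
    refine sum_le_sum fun k hk => ?_
    have hkN : k ≤ N := Nat.lt_succ_iff.mp (mem_range.mp hk)
    exact mul_le_mul_of_nonneg_left (pow_le_pow_of_le_one hr0 hr1 (by omega)) (ha k)
  have tail : ∑ k ∈ Ico (N + 1) j, a k * r ^ (j - k) ≤ ((j : ℝ) - N - 1) * (D * r ^ (j - N)) := by
    calc ∑ k ∈ Ico (N + 1) j, a k * r ^ (j - k)
        ≤ ∑ _k ∈ Ico (N + 1) j, D * r ^ (j - N) := by
          refine sum_le_sum fun k hk => ?_
          obtain ⟨hNk, hkj⟩ := mem_Ico.mp hk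
          calc a k * r ^ (j - k) ≤ D * r ^ (k - N) * r ^ (j - k) := by
                gcongr
                exact ih k hNk hkj
            _ = D * r ^ (j - N) := by rw [mul_assoc, ← pow_add]; congr 2; omega
      _ = ((j : ℝ) - N - 1) * (D * r ^ (j - N)) := by
          rw [sum_const, Nat.card_Ico, nsmul_eq_mul, Nat.cast_sub hNj]
          push_cast
          ring
  rw [← sum_range_add_sum_Ico _ hNj]
  linarith

theorem le_mul_pow_of_sub_mul_le_convolution (ha : ∀ j, 0 ≤ a j) (hr0 : 0 ≤ r) (hr1 : r ≤ 1)
    {b : ℕ → ℝ} (hb : ∀ n, 1 ≤ n → b n ≤ r ^ n)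
    (hrec : ∀ j, N < j → ((j : ℝ) - N) * a j ≤ ∑ k ∈ range j, a k * b (j - k)) :
    ∀ j, N ≤ j → a j ≤ (∑ i ∈ range (N + 1), a i) * r ^ (j - N) := by
  intro j
  induction j using Nat.strong_induction_on with
  | _ j ih =>
    intro hNj
    rcases hNj.eq_or_lt with rfl | hNj
    · rw [Nat.sub_self, pow_zero, mul_one]
      exact single_le_sum (fun k _ => ha k) (self_mem_range_succ N)
    · have hpos : (0 : ℝ) < (j : ℝ) - N := sub_pos.mpr (Nat.cast_lt.mpr hNj)
      refine le_of_mul_le_mul_left ?_ hpos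
      calc ((j : ℝ) - N) * a j ≤ ∑ k ∈ range j, a k * b (j - k) := hrec j hNj
        _ ≤ ∑ k ∈ range j, a k * r ^ (j - k) := by
          refine sum_le_sum fun k hk => mul_le_mul_of_nonneg_left (hb _ ?_) (ha k)
          have := mem_range.mp hk
          omega
        _ ≤ _ := sum_mul_pow_sub_le ha hr0 hr1 hNj fun k hNk hkj => ih k hkj hNk.le

lemma summable_of_le_mul_pow_sub (ha : ∀ j, 0 ≤ a j) (hr0 : 0 ≤ r) (hr1 : r < 1) {D : ℝ}
    (h : ∀ j, N ≤ j → a j ≤ D * r ^ (j - N)) : Summable a := by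
  rw [← summable_nat_add_iff N]
  refine ((summable_geometric_of_lt_one hr0 hr1).mul_left D).of_nonneg_of_le (fun n => ha _)
    fun n => ?_
  simpa using h (n + N) (Nat.le_add_left N n)

end ConvolutionBound

lemma two_zpow_sub_eq_half_pow {N j : ℕ} (h : N ≤ j) :
    (2 : ℝ) ^ ((N : ℤ) - (j : ℤ)) = (1 / 2) ^ (j - N) := by
  rw [show (N : ℤ) - j = -((j - N : ℕ) : ℤ) by omega, zpow_neg, zpow_natCast, one_div, inv_pow]

theorem gauge_convergence_estimate_general
    (c : ℕ → ℝ) (m : ℕ → ℝ) (c₀ : ℕ) (C ε₀ δ : ℝ)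
    (hc : ∀ j : ℕ, 1 ≤ j → 0 ≤ c j)
    (hm : ∀ j, 0 ≤ m j)
    (hC : 1 < C)
    (hcC : ∀ j : ℕ, 1 ≤ j → c j * ε₀ ^ j < C)
    (hrec : ∀ j : ℕ, c₀ < j →
      ((j : ℝ) - (c₀ : ℝ)) * m j ≤ ∑ k ∈ Finset.range j, m k * c (j - k))
    (hδ0 : 0 ≤ δ) (hδ : δ ≤ ε₀ / (2 * C)) :
    (∀ j : ℕ, c₀ ≤ j →
      m j * δ ^ j ≤ (∑ k ∈ Finset.range (c₀ + 1), m k * δ ^ k) *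
        (2 : ℝ) ^ ((c₀ : ℤ) - (j : ℤ))) ∧
    Summable (fun j => m j * δ ^ j) := by
  have ha : ∀ j, 0 ≤ m j * δ ^ j := fun j => mul_nonneg (hm j) (pow_nonneg hδ0 j)
  have hb : ∀ n, 1 ≤ n → c n * δ ^ n ≤ (1 / 2) ^ n := fun n hn =>
    mul_pow_le_half_pow (by omega) (hc n hn) hC.le (hcC n hn).le hδ0 hδ
  have hrec' : ∀ j, c₀ < j → ((j : ℝ) - c₀) * (m j * δ ^ j) ≤
      ∑ k ∈ range j, (m k * δ ^ k) * (c (j - k) * δ ^ (j - k)) := fun j hj => by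
    rw [← sum_mul_mul_sub_mul_pow, ← mul_assoc]
    exact mul_le_mul_of_nonneg_right (hrec j hj) (pow_nonneg hδ0 j)
  have key := le_mul_pow_of_sub_mul_le_convolution ha (by norm_num) (by norm_num) hb hrec'
  refine ⟨fun j hj => ?_, summable_of_le_mul_pow_sub ha (by norm_num) (by norm_num) key⟩
  rw [two_zpow_sub_eq_half_pow hj]
  exact key j hj

/-- Convergence estimate for the gauge-fixing theorem: if
`(j - c₀) mⱼ ≤ ∑_{k<j} m_k c_{j-k}` for `j > c₀` and `c_j ε₀^j < C`, then for
`δ ≤ ε₀/(2C)` and `D = ∑_{k ≤ c₀} m_k δ^k` one has `m_j δ^j ≤ D 2^{c₀-j}` for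
`j ≥ c₀`; in particular `∑ m_j δ^j` converges. -/
theorem gauge_convergence_estimate
    (c : ℕ → ℝ) (m : ℕ → ℝ) (c₀ : ℕ) (C ε₀ δ : ℝ)
    (hc₀ : 2 ≤ c₀)
    (hc : ∀ j : ℕ, 1 ≤ j → 0 ≤ c j)
    (hm : ∀ j, 0 ≤ m j)
    (hC : 1 < C) (hε₀ : 0 < ε₀)
    (hcC : ∀ j : ℕ, 1 ≤ j → c j * ε₀ ^ j < C)
    (hrec : ∀ j : ℕ, c₀ < j →
      ((j : ℝ) - (c₀ : ℝ)) * m j ≤ ∑ k ∈ Finset.range j, m k * c (j - k))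
    (hδ0 : 0 ≤ δ) (hδ : δ ≤ ε₀ / (2 * C)) :
    (∀ j : ℕ, c₀ ≤ j →
      m j * δ ^ j ≤ (∑ k ∈ Finset.range (c₀ + 1), m k * δ ^ k) *
        (2 : ℝ) ^ ((c₀ : ℤ) - (j : ℤ))) ∧
    Summable (fun j => m j * δ ^ j) :=
  gauge_convergence_estimate_general c m c₀ C ε₀ δ hc hm hC hcC hrec hδ0 hδ
end

section
/- Let Q be an invertible r×r complex matrix. Then there exists a permutation matrix P such that every bottom-right square minor of QP⁻¹ is nonsingular, i.e., for each k = 1, ..., r the submatrix of QP⁻¹ formed by the last k rows and last k columns is invertible. -/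
open Matrix

/-!
Induct on `r`. Laplace expansion of `det Q` along the first row shows that deleting the first
row and some column `j` leaves a nonsingular minor. Apply the induction hypothesis to it and
move column `j` to the front: every bottom-right block of size `k ≤ r - 1` then lies inside
that minor, and the block of size `r` is `Q` with permuted columns.
-/

namespace Matrix

variable {α K : Type*} {r k : ℕ}

def bottomIndex (hk : k ≤ r) (i : Fin k) : Fin r :=
  ⟨r - k + i, (Nat.add_lt_add_left i.isLt (r - k)).trans_eq (Nat.sub_add_cancel hk)⟩

def bottomRight (A : Matrix (Fin r) (Fin r) α) (hk : k ≤ r) : Matrix (Fin k) (Fin k) α :=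
  A.submatrix (bottomIndex hk) (bottomIndex hk)

theorem bottomRight_self (A : Matrix (Fin r) (Fin r) α) : A.bottomRight le_rfl = A := by
  ext i j
  simp [bottomRight, bottomIndex]

theorem bottomRight_of_le_pred {n : ℕ} (A : Matrix (Fin (n + 1)) (Fin (n + 1)) α) (hk : k ≤ n) :
    A.bottomRight (hk.trans n.le_succ) = (A.submatrix Fin.succ Fin.succ).bottomRight hk := by
  have succ_bottomIndex (i : Fin k) :
      bottomIndex (hk.trans n.le_succ) i = (bottomIndex hk i).succ := by
    ext
    simp only [bottomIndex, Fin.val_succ]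
    omega
  ext i j
  simp [bottomRight, succ_bottomIndex]

theorem exists_det_submatrix_succ_succAbove_ne_zero [Field K] {n : ℕ}
    (A : Matrix (Fin (n + 1)) (Fin (n + 1)) K) (hA : A.det ≠ 0) :
    ∃ j : Fin (n + 1), (A.submatrix Fin.succ j.succAbove).det ≠ 0 := by
  by_contra! h
  exact hA (by simp [det_succ_row_zero A, h])

theorem det_submatrix_id_perm_ne_zero [Field K] (A : Matrix (Fin r) (Fin r) K) (hA : A.det ≠ 0)
    (σ : Equiv.Perm (Fin r)) : (A.submatrix id σ).det ≠ 0 := by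
  rw [det_permute']
  exact mul_ne_zero ((Equiv.Perm.sign σ).isUnit.map (Int.castRingHom K)).ne_zero hA

theorem exists_perm_det_bottomRight_ne_zero [Field K] (A : Matrix (Fin r) (Fin r) K)
    (hA : A.det ≠ 0) :
    ∃ σ : Equiv.Perm (Fin r), ∀ k (hk : k ≤ r), ((A.submatrix id σ).bottomRight hk).det ≠ 0 := by
  induction r with
  | zero => exact ⟨1, fun k hk => by obtain rfl := Nat.le_zero.mp hk; simp⟩
  | succ n ih =>
    obtain ⟨j, hj⟩ := exists_det_submatrix_succ_succAbove_ne_zero A hA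
    obtain ⟨τ, hτ⟩ := ih _ hj
    -- `σ` puts column `j` first and the remaining columns in the order chosen by `τ`.
    let σ := j.cycleRange.symm * Equiv.Perm.decomposeFin.symm (0, τ)
    have hσ : (A.submatrix id σ).submatrix Fin.succ Fin.succ =
        (A.submatrix Fin.succ j.succAbove).submatrix id τ := by
      ext a b
      simp [σ, Equiv.Perm.decomposeFin_symm_apply_succ, Fin.cycleRange_symm_succ]
    refine ⟨σ, fun k hk => ?_⟩
    rcases hk.lt_or_eq with hk | rfl
    · rw [bottomRight_of_le_pred _ (Nat.le_of_lt_succ hk), hσ]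
      exact hτ k _
    · rw [bottomRight_self]
      exact det_submatrix_id_perm_ne_zero A hA σ

end Matrix

/-- For any invertible matrix `Q` there is a permutation of the columns after which
every bottom-right square minor is nonsingular. -/
theorem exists_perm_bottomRight_minors_nonsingular {r : ℕ}
    (Q : Matrix (Fin r) (Fin r) ℂ) (hQ : IsUnit Q.det) :
    ∃ σ : Equiv.Perm (Fin r), ∀ k : ℕ, 1 ≤ k → (hk : k ≤ r) →
      IsUnit (((Q.submatrix id σ).submatrix
        (fun i : Fin k => (⟨r - k + i, by omega⟩ : Fin r))
        (fun j : Fin k => (⟨r - k + j, by omega⟩ : Fin r))).det) := by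
  obtain ⟨σ, hσ⟩ := exists_perm_det_bottomRight_ne_zero Q hQ.ne_zero
  exact ⟨σ, fun k _ hk => isUnit_iff_ne_zero.mpr (hσ k hk)⟩
end

section
/- Suppose ρ_j^i (j = 1,...,n; i = 1,...,4) are nonzero complex numbers, Λ^i := −∑_{j=1}^n Re(norm log ρ_j^i) are integers, and for each j either (ρ_j^1 = ρ_j^3 and ρ_j^2 = ρ_j^4) or (ρ_j^1 = ρ_j^4 and ρ_j^2 = ρ_j^3). Then Λ^1 + Λ^2 − Λ^3 = Λ^4, and if integers φ_j^i (i = 1,2,3) satisfy φ_j^i = φ_j^k whenever ρ_j^i = ρ_j^k (for i,k ∈ {1,2,3}) and ∑_j φ_j^i = Λ^i for i = 1,2,3, then setting φ_j^4 := φ_j^1 + φ_j^2 − φ_j^3 yields ∑_j φ_j^4 = Λ^4 and φ_j^i = φ_j^k whenever ρ_j^i = ρ_j^k for all i,k ∈ {1,2,3,4}. -/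
open Complex Finset

/-- Rank-four parabolic combinatorics: with eigenvalues paired as
`(ρ¹,ρ³),(ρ²,ρ⁴)` or `(ρ¹,ρ⁴),(ρ²,ρ³)` at each point, one has
`Λ¹ + Λ² - Λ³ = Λ⁴`, and a weight solution for `i = 1,2,3` extends to `i = 4`
by `φⱼ⁴ := φⱼ¹ + φⱼ² - φⱼ³`. -/
theorem rank_four_weights {n : ℕ}
    (ρ μ : Fin n → Fin 4 → ℂ) (Λ : Fin 4 → ℤ)
    (hρ : ∀ j i, ρ j i ≠ 0)
    (hμ : ∀ j i, Complex.exp ((2 * ↑Real.pi * Complex.I) * μ j i) = ρ j i)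
    (hμre : ∀ j i, (μ j i).re ∈ Set.Ico (0 : ℝ) 1)
    (hΛ : ∀ i, (Λ i : ℝ) = -∑ j, (μ j i).re)
    (hpair : ∀ j, (ρ j 0 = ρ j 2 ∧ ρ j 1 = ρ j 3) ∨ (ρ j 0 = ρ j 3 ∧ ρ j 1 = ρ j 2)) :
    Λ 0 + Λ 1 - Λ 2 = Λ 3 ∧
    ∀ φ : Fin n → Fin 4 → ℤ,
      (∀ j, ∀ i k : Fin 4, i ≠ 3 → k ≠ 3 → ρ j i = ρ j k → φ j i = φ j k) →
      (∀ i : Fin 4, i ≠ 3 → ∑ j, φ j i = Λ i) →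
      (∀ j, φ j 3 = φ j 0 + φ j 1 - φ j 2) →
      (∑ j, φ j 3 = Λ 3 ∧ ∀ j, ∀ i k : Fin 4, ρ j i = ρ j k → φ j i = φ j k) := by
  -- uniqueness of μ from ρ
  have muinj : ∀ j (i k : Fin 4), ρ j i = ρ j k → μ j i = μ j k := by
    intro j i k h
    have hexp : Complex.exp ((2 * ↑Real.pi * Complex.I) * μ j i)
        = Complex.exp ((2 * ↑Real.pi * Complex.I) * μ j k) := by
      rw [hμ j i, hμ j k, h]
    rw [Complex.exp_eq_exp_iff_exists_int] at hexp
    obtain ⟨m, hm⟩ := hexp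
    have h2 : (2 * ↑Real.pi * Complex.I) * μ j i
        = (2 * ↑Real.pi * Complex.I) * (μ j k + m) := by
      rw [hm]; ring
    have hπ : (2 * ↑Real.pi * Complex.I) ≠ 0 := by
      simp [Real.pi_ne_zero, Complex.I_ne_zero]
    have h3 : μ j i = μ j k + m := mul_left_cancel₀ hπ h2
    have hre : (μ j i).re = (μ j k).re + m := by
      rw [h3]; simp
    have hi := hμre j i
    have hk := hμre j k
    have hm0 : m = 0 := by
      have h1 : (m : ℝ) < 1 := by linarith [hi.2, hk.1]
      have h2 : (-1 : ℝ) < m := by linarith [hi.1, hk.2]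
      have h1' : m < 1 := by exact_mod_cast h1
      have h2' : (-1 : ℤ) < m := by exact_mod_cast h2
      omega
    rw [hm0] at h3
    simpa using h3
  -- real parts balance at each point
  have hbal : ∀ j, (μ j 0).re + (μ j 1).re = (μ j 2).re + (μ j 3).re := by
    intro j
    rcases hpair j with ⟨h1, h2⟩ | ⟨h1, h2⟩
    · rw [muinj j 0 2 h1, muinj j 1 3 h2]
    · rw [muinj j 0 3 h1, muinj j 1 2 h2]; ring
  have hΛeq : Λ 0 + Λ 1 - Λ 2 = Λ 3 := by
    have : ((Λ 0 + Λ 1 - Λ 2 : ℤ) : ℝ) = ((Λ 3 : ℤ) : ℝ) := by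
      push_cast
      rw [hΛ 0, hΛ 1, hΛ 2, hΛ 3]
      have hs : (∑ j, (μ j 0).re) + (∑ j, (μ j 1).re) - (∑ j, (μ j 2).re)
          = ∑ j, (μ j 3).re := by
        rw [← Finset.sum_add_distrib, ← Finset.sum_sub_distrib]
        exact Finset.sum_congr rfl fun j _ => by linarith [hbal j]
      linarith
    exact_mod_cast this
  refine ⟨hΛeq, ?_⟩
  intro φ hcomp hsum hdef
  constructor
  · calc ∑ j, φ j 3 = ∑ j, (φ j 0 + φ j 1 - φ j 2) := by
          exact Finset.sum_congr rfl fun j _ => hdef j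
      _ = (∑ j, φ j 0) + (∑ j, φ j 1) - (∑ j, φ j 2) := by
          rw [← Finset.sum_add_distrib, ← Finset.sum_sub_distrib]
      _ = Λ 0 + Λ 1 - Λ 2 := by
          rw [hsum 0 (by decide), hsum 1 (by decide), hsum 2 (by decide)]
      _ = Λ 3 := hΛeq
  · intro j i k h
    -- helper: for i ≠ 3, ρ j i = ρ j 3 → φ j i = φ j 3
    have key : ∀ i : Fin 4, i ≠ 3 → ρ j i = ρ j 3 → φ j i = φ j 3 := by
      intro i hi3 hi
      rcases hpair j with ⟨h1, h2⟩ | ⟨h1, h2⟩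
      · -- ρ0=ρ2, ρ1=ρ3; φ3 = φ0+φ1-φ2 = φ1
        have h02 : φ j 0 = φ j 2 := hcomp j 0 2 (by decide) (by decide) h1
        have h3 : φ j 3 = φ j 1 := by rw [hdef j, h02]; ring
        have : ρ j i = ρ j 1 := by rw [hi, h2]
        rw [h3]
        exact hcomp j i 1 hi3 (by decide) this
      · have h12 : φ j 1 = φ j 2 := hcomp j 1 2 (by decide) (by decide) h2
        have h3 : φ j 3 = φ j 0 := by rw [hdef j, h12]; ring
        have : ρ j i = ρ j 0 := by rw [hi, h1]
        rw [h3]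
        exact hcomp j i 0 hi3 (by decide) this
    by_cases hi : i = 3 <;> by_cases hk : k = 3
    · rw [hi, hk]
    · subst hi; exact (key k hk h.symm).symm
    · subst hk; exact key i hi h
    · exact hcomp j i k hi hk h
end
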